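/- arXiv:1311.4216 — 5 statements merged into one kernel-verified Lean document; each statement's English description precedes it below -/
import Mathlib

section
/- Let χ be a Dirichlet character, and let p₁ < ... < pₙ be the first n primes with pₙ₊₁ the (n+1)-st prime. Then as s → ∞ (real s), ∏_{k=1}^n (1 - χ(p_k)/p_k^s) · ∑_{j=1}^∞ χ(j)/j^s − 1 = χ(pₙ₊₁)/pₙ₊₁^s + o(pₙ₊₁^{-s}). Equivalently, pₙ₊₁^s · (∏_{k=1}^n (1 - χ(p_k)/p_k^s) · L(s,χ) − 1) tends to χ(pₙ₊₁) as s → ∞. -/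
/-! Multiplying `L(s, χ)` by the Euler factors `1 - χ(p) p⁻ˢ` of the primes `p < q = pₙ₊₁` sieves
out every `m` with a prime factor below `q`, leaving the sum of `χ(m) m⁻ˢ` over the `q`-rough `m`.
Its terms `m = 1` and `m = q` give `1 + χ(q) q⁻ˢ`; every other rough `m` exceeds `q`, so after
multiplying by `qˢ` the remaining terms are bounded by `(q / m)ˢ`, and they tend to `0` by dominated
convergence against `∑ (q / m)²`. -/

open Filter Topology Finset

section Sieve

variable {F : Type*} [NormedField F] [CompleteSpace F] {f : ℕ →*₀ F}

theorem one_sub_mul_tsum_indicator_eq_tsum_indicator_sdiff (hf : Summable f) {p : ℕ} (hp : p ≠ 0)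
    {S : Set ℕ} (hS : ∀ m, p * m ∈ S ↔ m ∈ S) :
    (1 - f p) * ∑' m, S.indicator f m = ∑' m, (S \ {m | p ∣ m}).indicator f m := by
  set D : Set ℕ := {m | p ∣ m}
  have hsplit : ∑' m, S.indicator f m =
      ∑' m, (S \ D).indicator f m + ∑' m, (S ∩ D).indicator f m := by
    rw [← (hf.indicator _).tsum_add (hf.indicator _)]
    congr with m
    by_cases hmS : m ∈ S <;> by_cases hmD : m ∈ D <;> simp [hmS, hmD]
  have hmul : ∑' m, (S ∩ D).indicator f m = f p * ∑' m, S.indicator f m := by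
    have hsupp : Function.support ((S ∩ D).indicator f) ⊆ Set.range (p * ·) := fun m hm ↦
      let ⟨c, hc⟩ := (Set.mem_of_indicator_ne_zero hm).2; ⟨c, hc.symm⟩
    rw [← (mul_right_injective₀ hp).tsum_eq hsupp, ← tsum_mul_left]
    congr with m
    by_cases hm : m ∈ S
    · have hpm : p * m ∈ S ∩ D := ⟨(hS m).2 hm, dvd_mul_right p m⟩
      rw [Set.indicator_of_mem hm, Set.indicator_of_mem hpm, map_mul]
    · rw [Set.indicator_of_notMem hm, Set.indicator_of_notMem fun h ↦ hm ((hS m).1 h.1), mul_zero]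
  linear_combination hsplit + hmul

theorem prod_one_sub_mul_tsum_eq_tsum_indicator (hf : Summable f) {s : Finset ℕ}
    (hs : ∀ p ∈ s, p.Prime) :
    (∏ p ∈ s, (1 - f p)) * ∑' m, f m = ∑' m, {m | ∀ p ∈ s, ¬ p ∣ m}.indicator f m := by
  induction s using Finset.induction_on with
  | empty => simp
  | insert p s hps ih =>
    have hp := hs p (mem_insert_self p s)
    have hs' : ∀ q ∈ s, q.Prime := fun q hq ↦ hs q (mem_insert_of_mem hq)
    have hdvd (q : ℕ) (hq : q ∈ s) (m : ℕ) : q ∣ p * m ↔ q ∣ m := by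
      refine (hs' q hq).dvd_mul.trans (or_iff_right fun h ↦ ?_)
      exact hps ((Nat.prime_dvd_prime_iff_eq (hs' q hq) hp).1 h ▸ hq)
    have hset : {m | ∀ q ∈ s, ¬ q ∣ m} \ {m | p ∣ m} = {m | ∀ q ∈ insert p s, ¬ q ∣ m} := by
      ext m
      simp [and_comm]
    rw [prod_insert hps, mul_assoc, ih hs',
      one_sub_mul_tsum_indicator_eq_tsum_indicator_sdiff hf hp.ne_zero, hset]
    exact fun m ↦ forall₂_congr fun q hq ↦ not_congr (hdvd q hq m)

end Sieve

theorem tsum_indicator_eq_add_add_tsum_indicator_sdiff {α G : Type*} [NormedAddCommGroup G]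
    [CompleteSpace G] {g : α → G} (hg : Summable g) {S : Set α} {a b : α} (ha : a ∈ S)
    (hb : b ∈ S) (hab : a ≠ b) :
    ∑' m, S.indicator g m = g a + g b + ∑' m, (S \ {a, b}).indicator g m := by
  classical
  rw [Set.indicator_sdiff (Set.insert_subset ha (Set.singleton_subset_iff.2 hb))]
  simp only [Pi.sub_apply]
  rw [(hg.indicator _).tsum_sub (hg.indicator _), ← Finset.coe_pair, ← sum_eq_tsum_indicator,
    sum_pair hab]
  abel

namespace Nat

theorem image_nth_prime_range (n : ℕ) :
    (range n).image (nth Nat.Prime) = primesBelow (nth Nat.Prime n) := by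
  ext p
  simp only [mem_image, mem_range, mem_primesBelow]
  constructor
  · rintro ⟨i, hi, rfl⟩
    exact ⟨nth_strictMono infinite_setOfPred_prime hi, prime_nth_prime i⟩
  · rintro ⟨hlt, hp⟩
    refine ⟨count Nat.Prime p, ?_, nth_count hp⟩
    rwa [← nth_lt_nth infinite_setOfPred_prime, nth_count hp]

theorem le_of_forall_primesBelow_not_dvd {q m : ℕ} (hm : ∀ p ∈ q.primesBelow, ¬ p ∣ m)
    (h0 : m ≠ 0) (h1 : m ≠ 1) : q ≤ m := by
  by_contra! hlt
  exact hm _ (mem_primesBelow.2 ⟨(minFac_le (pos_of_ne_zero h0)).trans_lt hlt, minFac_prime h1⟩)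
    (minFac_dvd m)

/-- For `q ≤ 2` this contains `0`, whose `L`-series term vanishes. -/
def roughTail (q : ℕ) : Set ℕ := {m | ∀ p ∈ q.primesBelow, ¬ p ∣ m} \ {1, q}

theorem eq_zero_or_lt_of_mem_roughTail {q m : ℕ} (hm : m ∈ roughTail q) : m = 0 ∨ q < m := by
  obtain ⟨hrough, hm1q⟩ := hm
  simp only [Set.mem_insert_iff, Set.mem_singleton_iff, not_or] at hm1q
  rcases eq_or_ne m 0 with h0 | h0
  · exact .inl h0
  · exact .inr ((le_of_forall_primesBelow_not_dvd hrough h0 hm1q.1).lt_of_ne' hm1q.2)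

end Nat

namespace DirichletCharacter

variable {k : ℕ} (χ : DirichletCharacter ℂ k)

theorem dirichletSummandHom_apply {s : ℂ} (hs : s ≠ 0) (m : ℕ) :
    dirichletSummandHom χ hs m = χ m / (m : ℂ) ^ s := by
  simp [dirichletSummandHom, Complex.cpow_neg, div_eq_mul_inv]

theorem norm_natCast_cpow_mul_div_natCast_cpow_le (q m : ℕ) {s : ℝ} (hs : s ≠ 0) :
    ‖(q : ℂ) ^ (s : ℂ) * (χ m / (m : ℂ) ^ (s : ℂ))‖ ≤ ((q : ℝ) / m) ^ s := by
  have hre : (s : ℂ).re ≠ 0 := by simpa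
  rw [norm_mul, norm_div, Complex.norm_natCast_cpow_of_re_ne_zero _ hre,
    Complex.norm_natCast_cpow_of_re_ne_zero _ hre, Complex.ofReal_re,
    Real.div_rpow (by positivity) (by positivity), mul_div_assoc']
  gcongr
  exact mul_le_of_le_one_right (by positivity) (χ.norm_le_one m)


open Nat in
theorem natCast_cpow_mul_prod_mul_tsum_sub_one (n : ℕ) {s : ℝ} (hs : 1 < s) :
    (nth Nat.Prime n : ℂ) ^ (s : ℂ) *
        ((∏ i ∈ range n, (1 - χ (nth Nat.Prime i) / (nth Nat.Prime i : ℂ) ^ (s : ℂ))) *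
          (∑' j : ℕ, χ j / (j : ℂ) ^ (s : ℂ)) - 1) =
      χ (nth Nat.Prime n) + ∑' m, (nth Nat.Prime n : ℂ) ^ (s : ℂ) *
        (roughTail (nth Nat.Prime n)).indicator (fun m ↦ χ m / (m : ℂ) ^ (s : ℂ)) m := by
  set q := nth Nat.Prime n
  have hs' : 1 < (s : ℂ).re := by simpa
  set f := dirichletSummandHom χ (Complex.ne_zero_of_one_lt_re hs')
  have hf (m : ℕ) : χ m / (m : ℂ) ^ (s : ℂ) = f m := (dirichletSummandHom_apply χ _ m).symm
  have hq : q.Prime := prime_nth_prime n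
  have hrough_one : 1 ∈ {m | ∀ p ∈ q.primesBelow, ¬ p ∣ m} := fun p hp hdvd ↦
    (prime_of_mem_primesBelow hp).one_lt.ne' (Nat.dvd_one.1 hdvd)
  have hrough_q : q ∈ {m | ∀ p ∈ q.primesBelow, ¬ p ∣ m} := fun p hp hdvd ↦
    (lt_of_mem_primesBelow hp).ne ((prime_dvd_prime_iff_eq (prime_of_mem_primesBelow hp) hq).1 hdvd)
  have hprod : ∏ i ∈ range n, (1 - f (nth Nat.Prime i)) = ∏ p ∈ q.primesBelow, (1 - f p) := by
    rw [← image_nth_prime_range, prod_image (nth_injective infinite_setOfPred_prime).injOn]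
  have hfq : (q : ℂ) ^ (s : ℂ) * f q = χ q := by
    rw [← hf, mul_div_cancel₀]
    exact (Complex.cpow_ne_zero_iff_of_exponent_ne_zero (Complex.ne_zero_of_one_lt_re hs')).2
      (mod_cast hq.ne_zero)
  simp only [hf]
  rw [hprod, prod_one_sub_mul_tsum_eq_tsum_indicator (summable_dirichletSummand χ hs').of_norm
    fun p hp ↦ prime_of_mem_primesBelow hp, tsum_indicator_eq_add_add_tsum_indicator_sdiff
    (summable_dirichletSummand χ hs').of_norm hrough_one hrough_q hq.one_lt.ne, tsum_mul_left,
    map_one]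
  unfold roughTail
  linear_combination hfq

theorem tendsto_tsum_natCast_cpow_mul_indicator_roughTail (q : ℕ) :
    Tendsto (fun s : ℝ ↦ ∑' m, (q : ℂ) ^ (s : ℂ) *
      (Nat.roughTail q).indicator (fun m ↦ χ m / (m : ℂ) ^ (s : ℂ)) m) atTop (𝓝 0) := by
  have hratio {m : ℕ} (hm : m ∈ Nat.roughTail q) : 0 ≤ (q : ℝ) / m ∧ (q : ℝ) / m < 1 := by
    refine ⟨by positivity, ?_⟩
    rcases Nat.eq_zero_or_lt_of_mem_roughTail hm with rfl | hlt
    · simp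
    · exact (div_lt_one (by exact_mod_cast q.zero_le.trans_lt hlt)).2 (by exact_mod_cast hlt)
  have hterm {s : ℝ} (hs : s ≠ 0) (m : ℕ) :
      ‖(q : ℂ) ^ (s : ℂ) * (Nat.roughTail q).indicator (fun m ↦ χ m / (m : ℂ) ^ (s : ℂ)) m‖ ≤
        (Nat.roughTail q).indicator (fun m ↦ ((q : ℝ) / m) ^ s) m := by
    by_cases hm : m ∈ Nat.roughTail q
    · simp only [Set.indicator_of_mem hm]
      exact norm_natCast_cpow_mul_div_natCast_cpow_le χ q m hs
    · simp [Set.indicator_of_notMem hm]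
  rw [← tsum_zero]
  refine tendsto_tsum_of_dominated_convergence (bound := fun m ↦ ((q : ℝ) / m) ^ 2) ?_
    (fun m ↦ ?_) ?_
  · refine ((Real.summable_nat_pow_inv.2 one_lt_two).mul_left ((q : ℝ) ^ 2)).congr fun m ↦ ?_
    rw [div_pow, div_eq_mul_inv]
  · refine squeeze_zero_norm' ((eventually_ne_atTop 0).mono fun s hs ↦ hterm hs m) ?_
    by_cases hm : m ∈ Nat.roughTail q
    · simp only [Set.indicator_of_mem hm]
      exact tendsto_rpow_atTop_of_base_lt_one _ (by linarith [hratio hm]) (hratio hm).2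
    · simp only [Set.indicator_of_notMem hm, tendsto_const_nhds]
  · filter_upwards [eventually_ge_atTop 2] with s hs m
    refine (hterm (by positivity) m).trans ?_
    by_cases hm : m ∈ Nat.roughTail q
    · rw [Set.indicator_of_mem hm, ← Real.rpow_natCast]
      exact Real.rpow_le_rpow_of_exponent_ge' (hratio hm).1 (hratio hm).2.le (by positivity)
        (by exact_mod_cast hs)
    · rw [Set.indicator_of_notMem hm]
      positivity

end DirichletCharacter

/-- As real s → ∞, pₙ₊₁^s · (∏_{k=1}^n (1 - χ(p_k)/p_k^s) · L(s,χ) − 1) → χ(pₙ₊₁). -/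
theorem stmt_2 (k : ℕ) (χ : DirichletCharacter ℂ k) (n : ℕ) :
    Tendsto (fun s : ℝ =>
      ((Nat.nth Nat.Prime n : ℕ) : ℂ) ^ (s : ℂ) *
        ((∏ i ∈ Finset.range n,
            (1 - χ ((Nat.nth Nat.Prime i : ℕ) : ZMod k) /
              (Nat.nth Nat.Prime i : ℂ) ^ (s : ℂ))) *
          (∑' j : ℕ, χ (j : ZMod k) / (j : ℂ) ^ (s : ℂ)) - 1))
      atTop (nhds (χ ((Nat.nth Nat.Prime n : ℕ) : ZMod k))) := by
  have htail := (DirichletCharacter.tendsto_tsum_natCast_cpow_mul_indicator_roughTail χ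
    (Nat.nth Nat.Prime n)).const_add (χ (Nat.nth Nat.Prime n))
  rw [add_zero] at htail
  refine htail.congr' ?_
  filter_upwards [eventually_gt_atTop 1] with s hs
  exact (DirichletCharacter.natCast_cpow_mul_prod_mul_tsum_sub_one χ n hs).symm
end

section
/- Let χ be a Dirichlet character modulo k, let p₁ < ... < pₙ be the first n primes, and suppose the (n+1)-st prime pₙ₊₁ does not divide k. Then pₙ₊₁ = lim_{s→∞} |∑_{j=1}^∞ χ(j)/j^s − ∏_{k=1}^n (1 - χ(p_k)/p_k^s)^{-1}|^{-1/s}, where s ranges over real numbers. -/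
/-!
The partial Euler product over the primes below `p = pₙ₊₁` is the sum of `χ(m) m⁻ˢ` over the
`p`-smooth `m`, so the difference `D(s)` is the sum over the remaining `m`, all of which are
`0` or `≥ p`. After multiplying by `pˢ`, the term at `m = p` is `χ(p)`, of norm one because
`p ∤ k`, and every other term is at most `(p/m)ˢ → 0`, dominated by `(p/m)²`. Hence
`pˢ ‖D(s)‖ → 1`, which forces `‖D(s)‖^(-1/s) → p`.
-/

open Filter Topology Finset Complex

lemma Nat.prod_range_nth_prime {M : Type*} [CommMonoid M] (g : ℕ → M) (n : ℕ) :
    ∏ i ∈ range n, g (nth Nat.Prime i) = ∏ q ∈ (nth Nat.Prime n).primesBelow, g q := by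
  induction n with
  | zero => simp [nth_prime_zero_eq_two]
  | succ n ih =>
    have hinsert : (nth Nat.Prime (n + 1)).primesBelow =
        insert (nth Nat.Prime n) (nth Nat.Prime n).primesBelow :=
      filter_range_nth_eq_insert_of_infinite infinite_setOfPred_prime n
    rw [prod_range_succ, ih, hinsert, prod_insert (by simp [mem_primesBelow]), mul_comm]

lemma Nat.le_of_notMem_smoothNumbers {n m : ℕ} (hm : m ≠ 0) (h : m ∉ n.smoothNumbers) :
    n ≤ m := by
  by_contra! hlt
  exact h (mem_smoothNumbers_of_lt (Nat.pos_of_ne_zero hm) hlt)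

lemma Nat.Prime.notMem_smoothNumbers_self {p : ℕ} (hp : p.Prime) : p ∉ p.smoothNumbers :=
  fun h => lt_irrefl p (mem_smoothNumbers'.mp h p hp dvd_rfl)

lemma EulerProduct.tsum_sub_prod_primesBelow_geometric {F : Type*} [NormedField F]
    [CompleteSpace F] {f : ℕ →* F} (hsum : Summable f) (N : ℕ) :
    ∑' m, f m - ∏ p ∈ N.primesBelow, (1 - f p)⁻¹ = ∑' m, (N.smoothNumbersᶜ).indicator f m := by
  rw [prod_primesBelow_geometric_eq_tsum_smoothNumbers hsum,
    ← hsum.tsum_subtype_add_tsum_subtype_compl N.smoothNumbers, add_sub_cancel_left,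
    _root_.tsum_subtype]

lemma DirichletCharacter.tsum_sub_prod_primesBelow {N : ℕ} (χ : DirichletCharacter ℂ N)
    {s : ℂ} (hs : 1 < s.re) (M : ℕ) :
    ∑' m : ℕ, χ m / (m : ℂ) ^ s - ∏ p ∈ M.primesBelow, (1 - χ p / (p : ℂ) ^ s)⁻¹ =
      ∑' m, (M.smoothNumbersᶜ).indicator (fun m : ℕ => χ m / (m : ℂ) ^ s) m := by
  set f := (dirichletSummandHom χ (ne_zero_of_one_lt_re hs)).toMonoidHom
  have hf : ∀ m : ℕ, f m = χ m / (m : ℂ) ^ s := fun m => by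
    simp [f, dirichletSummandHom, cpow_neg, div_eq_mul_inv]
  have h := EulerProduct.tsum_sub_prod_primesBelow_geometric
    (f := f) (summable_dirichletSummand χ hs).of_norm M
  simp only [hf] at h
  rwa [show ⇑f = fun m : ℕ => χ m / (m : ℂ) ^ s from funext hf] at h

lemma norm_natCast_cpow_mul_div_natCast_cpow {s : ℝ} (hs : s ≠ 0) (p m : ℕ) (z : ℂ) :
    ‖(p : ℂ) ^ (s : ℂ) * (z / (m : ℂ) ^ (s : ℂ))‖ = ‖z‖ * ((p : ℝ) / m) ^ s := by
  rw [norm_mul, norm_div, norm_natCast_cpow_of_re_ne_zero _ (by simpa using hs),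
    norm_natCast_cpow_of_re_ne_zero _ (by simpa using hs), ofReal_re,
    Real.div_rpow (by positivity) (by positivity)]
  ring

lemma Nat.cast_div_lt_one_of_notMem_smoothNumbers {n m : ℕ} (h : m ∉ n.smoothNumbers)
    (hmn : m ≠ n) : (n : ℝ) / m < 1 := by
  rcases eq_or_ne m 0 with rfl | hm
  · simp
  · rw [div_lt_one (by positivity)]
    exact_mod_cast (le_of_notMem_smoothNumbers hm h).lt_of_ne hmn.symm

section SmoothTail

variable {f : ℕ → ℂ} {p : ℕ}

lemma tendsto_natCast_cpow_mul_indicator_compl_smoothNumbers (hf : ∀ m, ‖f m‖ ≤ 1)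
    (hp : p.Prime) (m : ℕ) :
    Tendsto (fun s : ℝ => (p : ℂ) ^ (s : ℂ) *
        (p.smoothNumbersᶜ).indicator (fun m : ℕ => f m / (m : ℂ) ^ (s : ℂ)) m)
      atTop (𝓝 (if m = p then f m else 0)) := by
  by_cases hsm : m ∈ p.smoothNumbers
  · have hmp : m ≠ p := by rintro rfl; exact hp.notMem_smoothNumbers_self hsm
    simp [Set.indicator_of_notMem (Set.notMem_compl_iff.mpr hsm), hmp]
  have hsm' : m ∈ p.smoothNumbersᶜ := hsm
  by_cases hmp : m = p
  · subst hmp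
    refine tendsto_const_nhds.congr fun s => ?_
    rw [Set.indicator_of_mem hsm', if_pos rfl, mul_div_cancel₀]
    simp [hp.ne_zero]
  set r : ℝ := (p : ℝ) / m
  have hr : r < 1 := Nat.cast_div_lt_one_of_notMem_smoothNumbers hsm hmp
  rw [if_neg hmp]
  refine squeeze_zero_norm' ?_
    (tendsto_rpow_atTop_of_base_lt_one r (neg_one_lt_zero.trans_le (by positivity)) hr)
  filter_upwards [eventually_ne_atTop 0] with s hs
  rw [Set.indicator_of_mem hsm', norm_natCast_cpow_mul_div_natCast_cpow hs]
  exact mul_le_of_le_one_left (by positivity) (hf m)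

lemma norm_natCast_cpow_mul_indicator_compl_smoothNumbers_le (hf : ∀ m, ‖f m‖ ≤ 1)
    {s : ℝ} (hs : 2 ≤ s) (m : ℕ) :
    ‖(p : ℂ) ^ (s : ℂ) *
        (p.smoothNumbersᶜ).indicator (fun m : ℕ => f m / (m : ℂ) ^ (s : ℂ)) m‖ ≤
      ((p : ℝ) / m) ^ 2 := by
  by_cases hsm : m ∈ p.smoothNumbers
  · simp only [Set.indicator_of_notMem (Set.notMem_compl_iff.mpr hsm), mul_zero, norm_zero]
    positivity
  have hr : (p : ℝ) / m ≤ 1 := by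
    rcases eq_or_ne m p with rfl | hmp
    · exact div_self_le_one _
    · exact (Nat.cast_div_lt_one_of_notMem_smoothNumbers hsm hmp).le
  rw [Set.indicator_of_mem hsm, norm_natCast_cpow_mul_div_natCast_cpow (by positivity)]
  calc ‖f m‖ * ((p : ℝ) / m) ^ s ≤ ((p : ℝ) / m) ^ s :=
        mul_le_of_le_one_left (by positivity) (hf m)
    _ ≤ ((p : ℝ) / m) ^ (2 : ℝ) := Real.rpow_le_rpow_of_exponent_ge' (by positivity) hr
        (by norm_num) hs
    _ = ((p : ℝ) / m) ^ 2 := Real.rpow_two _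

theorem tendsto_natCast_cpow_mul_tsum_compl_smoothNumbers (hf : ∀ m, ‖f m‖ ≤ 1)
    (hp : p.Prime) :
    Tendsto (fun s : ℝ => (p : ℂ) ^ (s : ℂ) *
        ∑' m, (p.smoothNumbersᶜ).indicator (fun m : ℕ => f m / (m : ℂ) ^ (s : ℂ)) m)
      atTop (𝓝 (f p)) := by
  have hsum : Summable fun m : ℕ => ((p : ℝ) / m) ^ 2 := by
    refine ((Real.summable_nat_pow_inv.mpr one_lt_two).mul_left ((p : ℝ) ^ 2)).congr fun m => ?_
    rw [div_pow, div_eq_mul_inv]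
  have h := tendsto_tsum_of_dominated_convergence hsum
    (tendsto_natCast_cpow_mul_indicator_compl_smoothNumbers hf hp)
    ((eventually_ge_atTop 2).mono fun s hs =>
      norm_natCast_cpow_mul_indicator_compl_smoothNumbers_le hf hs)
  rw [tsum_ite_eq] at h
  exact h.congr fun s => tsum_mul_left

end SmoothTail

theorem Real.tendsto_rpow_neg_one_div_of_tendsto_rpow_mul {u : ℝ → ℝ} {P c : ℝ} (hP : 0 < P)
    (hc : 0 < c) (h : Tendsto (fun s => P ^ s * u s) atTop (𝓝 c)) :
    Tendsto (fun s => u s ^ (-1 / s)) atTop (𝓝 P) := by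
  have hexp : Tendsto (fun s : ℝ => -1 / s) atTop (𝓝 0) :=
    tendsto_const_nhds.div_atTop tendsto_id
  have hlim : Tendsto (fun s => P * (P ^ s * u s) ^ (-1 / s)) atTop (𝓝 P) := by
    simpa using (h.rpow hexp (Or.inl hc.ne')).const_mul P
  refine hlim.congr' ?_
  filter_upwards [h.eventually (lt_mem_nhds hc), eventually_gt_atTop 0] with s hpos hs
  have hu : 0 < u s := pos_of_mul_pos_right hpos (by positivity)
  rw [Real.mul_rpow (by positivity) hu.le, ← Real.rpow_mul hP.le,
    show s * (-1 / s) = -1 by field_simp, Real.rpow_neg_one, mul_inv_cancel_left₀ hP.ne']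

/-- pₙ₊₁ = lim_{s→∞} |∑_{j=1}^∞ χ(j)/j^s − ∏_{k=1}^n (1 - χ(p_k)/p_k^s)⁻¹|^{-1/s},
provided pₙ₊₁ does not divide the modulus k. -/
theorem stmt_3 (k : ℕ) (χ : DirichletCharacter ℂ k) (n : ℕ)
    (hdvd : ¬ Nat.nth Nat.Prime n ∣ k) :
    Tendsto (fun s : ℝ =>
      ‖((∑' j : ℕ, χ (j : ZMod k) / (j : ℂ) ^ (s : ℂ)) -
        ∏ i ∈ Finset.range n,
          (1 - χ ((Nat.nth Nat.Prime i : ℕ) : ZMod k) /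
            (Nat.nth Nat.Prime i : ℂ) ^ (s : ℂ))⁻¹)‖ ^ (-1 / s))
      atTop (nhds (Nat.nth Nat.Prime n : ℝ)) := by
  set p := Nat.nth Nat.Prime n
  have hp : p.Prime := Nat.prime_nth_prime n
  have hχp : ‖χ p‖ = 1 := by
    obtain ⟨u, hu⟩ := (ZMod.isUnit_prime_iff_not_dvd hp).mpr hdvd
    rw [← hu, χ.unit_norm_eq_one]
  have hscaled := (tendsto_natCast_cpow_mul_tsum_compl_smoothNumbers
    (fun m => χ.norm_le_one m) hp).norm
  rw [hχp] at hscaled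
  refine Real.tendsto_rpow_neg_one_div_of_tendsto_rpow_mul (by exact_mod_cast hp.pos) one_pos
    (hscaled.congr' ?_)
  filter_upwards [eventually_gt_atTop 1] with s hs
  rw [Nat.prod_range_nth_prime (fun q : ℕ => (1 - χ q / (q : ℂ) ^ (s : ℂ))⁻¹),
    χ.tsum_sub_prod_primesBelow (by simpa using hs), norm_mul,
    norm_natCast_cpow_of_pos hp.pos, ofReal_re]
end

section
/- Let p₁ < ... < pₙ be the first n primes (n ≥ 1). Then pₙ₊₁ = lim_{s→∞} [∑_{j=1}^{2pₙ−1} j^{−s} − ∏_{k=1}^n (1 − p_k^{−s})^{−1}]^{−1/s}, where s ranges over real numbers tending to infinity (Keller's recursion for primes). -/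
/-!
By the Euler product, `∏_{k ≤ n} (1 - p_k^{-s})⁻¹ = ∑ m^{-s}` over the `p_{n+1}`-smooth `m`, i.e.
those whose prime factors are all below `p_{n+1}`. Every positive integer below `p_{n+1}` is smooth
and `p_{n+1}` is not, while Bertrand's postulate gives `p_{n+1} ≤ 2 p_n - 1`. Hence the partial sum
minus the product is `p_{n+1}^{-s}` up to terms `m^{-s}` with `m > p_{n+1}`, whose total is
`O((p_{n+1} + 1)^{-s})`, and taking the `(-1/s)`-th power recovers `p_{n+1}` as `s → ∞`.
-/

open Filter Set

namespace Nat

theorem nth_prime_succ_lt_two_mul (k : ℕ) : nth Prime (k + 1) < 2 * nth Prime k := by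
  have hp := prime_nth_prime k
  obtain ⟨r, hr, hkr, hr2⟩ := exists_prime_lt_and_le_two_mul (nth Prime k) hp.ne_zero
  have hnext : nth Prime (k + 1) ≤ r := by
    rw [← nth_count hr]
    exact nth_monotone infinite_setOfPred_prime
      ((lt_nth_iff_count_lt infinite_setOfPred_prime).2 hkr)
  have hne : r ≠ 2 * nth Prime k := fun h => not_prime_mul (by norm_num) hp.one_lt.ne' (h ▸ hr)
  omega

theorem primesBelow_nth_prime (k : ℕ) :
    (nth Prime k).primesBelow = (Finset.range k).image (nth Prime) := by
  ext m
  simp only [mem_primesBelow, Finset.mem_image, Finset.mem_range]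
  constructor
  · rintro ⟨hlt, hm⟩
    refine ⟨count Prime m, ?_, nth_count hm⟩
    rwa [← nth_lt_nth infinite_setOfPred_prime, nth_count hm]
  · rintro ⟨i, hi, rfl⟩
    exact ⟨(nth_lt_nth infinite_setOfPred_prime).2 hi, prime_nth_prime i⟩

end Nat

section Comparison

variable {α : Type*} [LinearOrder α] {f : α → ℝ}

lemma abs_indicator_sub_indicator_sub_ite_le (hf : ∀ m, 0 ≤ f m) {F S : Set α} {q : α}
    (hqF : q ∈ F) (hqS : q ∉ S) (hlt : ∀ m < q, m ∈ F ↔ m ∈ S) (m : α) :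
    |F.indicator f m - S.indicator f m - (if m = q then f q else 0)| ≤ (Ioi q).indicator f m := by
  rcases lt_trichotomy m q with h | rfl | h
  · by_cases hm : m ∈ F
    · simp [hm, (hlt m h).1 hm, h.ne, h.le]
    · simp [hm, mt (hlt m h).2 hm, h.ne, h.le]
  · simp [hqF, hqS]
  · rw [if_neg h.ne', sub_zero, indicator_of_mem (show m ∈ Ioi q from h)]
    exact abs_sub_le_of_nonneg_of_le (indicator_nonneg (fun a _ => hf a) m)
      (indicator_le_self' (fun a _ => hf a) m) (indicator_nonneg (fun a _ => hf a) m)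
      (indicator_le_self' (fun a _ => hf a) m)

lemma abs_sum_sub_tsum_indicator_sub_le (hf : ∀ m, 0 ≤ f m) (hsum : Summable f)
    {F : Finset α} {S : Set α} {q : α} (hqF : q ∈ F) (hqS : q ∉ S)
    (hlt : ∀ m < q, m ∈ F ↔ m ∈ S) :
    |∑ j ∈ F, f j - ∑' m, S.indicator f m - f q| ≤ ∑' m, (Ioi q).indicator f m := by
  classical
  have he : ∀ m, ‖(F : Set α).indicator f m - S.indicator f m - (if m = q then f q else 0)‖ ≤
      (Ioi q).indicator f m :=
    abs_indicator_sub_indicator_sub_ite_le hf (Finset.mem_coe.2 hqF) hqS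
      (fun m hm => by rw [Finset.mem_coe]; exact hlt m hm)
  have hsplit : ∑ j ∈ F, f j - ∑' m, S.indicator f m - f q =
      ∑' m, ((F : Set α).indicator f m - S.indicator f m - (if m = q then f q else 0)) := by
    rw [((hsum.indicator _).sub (hsum.indicator _)).tsum_sub (hasSum_ite_eq q (f q)).summable,
      (hsum.indicator _).tsum_sub (hsum.indicator _), tsum_ite_eq, sum_eq_tsum_indicator]
  rw [hsplit]
  have htail : Summable ((Ioi q).indicator f) := hsum.indicator _
  have hnorm := htail.of_nonneg_of_le (fun _ => norm_nonneg _) he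
  exact (norm_tsum_le_tsum_norm hnorm).trans (hnorm.tsum_le_tsum he htail)

end Comparison

lemma tsum_indicator_Ioi_rpow_neg_le (q : ℕ) {s t : ℝ} (ht : 1 < t) (hts : t ≤ s) :
    ∑' m : ℕ, (Ioi q).indicator (fun m : ℕ => (m : ℝ) ^ (-s)) m ≤
      (∑' m : ℕ, (m : ℝ) ^ (-t)) * ((q : ℝ) + 1) ^ (t - s) := by
  have hsum : ∀ u : ℝ, 1 < u → Summable (fun m : ℕ => (m : ℝ) ^ (-u)) :=
    fun u hu => Real.summable_nat_rpow.2 (by linarith)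
  rw [← tsum_mul_right]
  refine ((hsum s (by linarith)).indicator _).tsum_le_tsum (fun m => ?_) ((hsum t ht).mul_right _)
  by_cases hm : m ∈ Ioi q
  · have hqm : (q : ℝ) + 1 ≤ m := by exact_mod_cast Nat.succ_le_of_lt hm
    have hm0 : (0 : ℝ) < m := by linarith
    rw [indicator_of_mem hm, show -s = -t + (t - s) by ring, Real.rpow_add hm0]
    exact mul_le_mul_of_nonneg_left (Real.rpow_le_rpow_of_nonpos (by linarith) hqm (by linarith))
      (by positivity)
  · rw [indicator_of_notMem hm]
    positivity

lemma tendsto_abs_rpow_neg_one_div_of_abs_sub_rpow_neg_le {D : ℝ → ℝ} {q r C : ℝ}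
    (hq : 0 < q) (hqr : q < r) (hD : ∀ᶠ s in atTop, |D s - q ^ (-s)| ≤ C * r ^ (-s)) :
    Tendsto (fun s => |D s| ^ (-1 / s)) atTop (nhds q) := by
  have hr : 0 < r := hq.trans hqr
  have hratio : Tendsto (fun s => D s * q ^ s) atTop (nhds 1) := by
    rw [tendsto_iff_norm_sub_tendsto_zero]
    have hgeom := (tendsto_rpow_atTop_of_base_lt_one (q / r) (by linarith [div_pos hq hr])
      ((div_lt_one hr).2 hqr)).const_mul C
    rw [mul_zero] at hgeom
    refine squeeze_zero_norm' ?_ hgeom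
    filter_upwards [hD] with s hs
    have hqs : 0 < q ^ s := Real.rpow_pos_of_pos hq s
    calc ‖‖D s * q ^ s - 1‖‖ = |D s - q ^ (-s)| * q ^ s := by
          rw [norm_norm, Real.norm_eq_abs, ← abs_of_pos hqs, ← abs_mul, abs_of_pos hqs, sub_mul,
            Real.rpow_neg hq.le, inv_mul_cancel₀ hqs.ne']
      _ ≤ C * r ^ (-s) * q ^ s := mul_le_mul_of_nonneg_right hs hqs.le
      _ = C * (q / r) ^ s := by
          rw [Real.div_rpow hq.le hr.le, Real.rpow_neg hr.le]
          ring
  have hroot : Tendsto (fun s => |D s * q ^ s| ^ (-1 / s)) atTop (nhds 1) := by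
    simpa using hratio.abs.rpow (tendsto_const_nhds.div_atTop tendsto_id) (Or.inl (by norm_num))
  refine (one_mul q ▸ hroot.mul_const q).congr' ?_
  filter_upwards [eventually_gt_atTop 0] with s hs
  have hqs : 0 < q ^ s := Real.rpow_pos_of_pos hq s
  rw [abs_mul, abs_of_pos hqs, Real.mul_rpow (abs_nonneg _) hqs.le, ← Real.rpow_mul hq.le,
    show s * (-1 / s) = -1 by field_simp, Real.rpow_neg_one, mul_assoc, inv_mul_cancel₀ hq.ne',
    mul_one]

lemma prod_range_nth_prime_eq_tsum_smoothNumbers (n : ℕ) {s : ℝ} (hs : 1 < s) :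
    ∏ i ∈ Finset.range n, (1 - (Nat.nth Nat.Prime i : ℝ) ^ (-s))⁻¹ =
      ∑' m : ℕ, (Nat.nth Nat.Prime n).smoothNumbers.indicator (fun m : ℕ => (m : ℝ) ^ (-s)) m := by
  let f : ℕ →* ℝ :=
    { toFun m := (m : ℝ) ^ (-s)
      map_one' := by simp
      map_mul' m k := by
        push_cast
        exact Real.mul_rpow m.cast_nonneg k.cast_nonneg }
  have hf : Summable f := Real.summable_nat_rpow.2 (by linarith)
  have h := EulerProduct.prod_primesBelow_geometric_eq_tsum_smoothNumbers hf (Nat.nth Nat.Prime n)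
  rwa [Nat.primesBelow_nth_prime, tsum_subtype,
    Finset.prod_image (Nat.nth_injective Nat.infinite_setOfPred_prime).injOn] at h

lemma abs_sum_Icc_sub_prod_nth_prime_sub_le {n N : ℕ} (hN : Nat.nth Nat.Prime n ≤ N) {s : ℝ}
    (hs : 2 ≤ s) :
    |∑ j ∈ Finset.Icc 1 N, (j : ℝ) ^ (-s) -
        ∏ i ∈ Finset.range n, (1 - (Nat.nth Nat.Prime i : ℝ) ^ (-s))⁻¹ -
        (Nat.nth Nat.Prime n : ℝ) ^ (-s)| ≤
      (∑' m : ℕ, (m : ℝ) ^ (-2 : ℝ)) * ((Nat.nth Nat.Prime n : ℝ) + 1) ^ (2 - s) := by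
  have hq := Nat.prime_nth_prime n
  rw [prod_range_nth_prime_eq_tsum_smoothNumbers n (by linarith)]
  refine (abs_sum_sub_tsum_indicator_sub_le (f := fun m : ℕ => (m : ℝ) ^ (-s))
    (fun m => by positivity) (Real.summable_nat_rpow.2 (by linarith)) ?_ ?_ ?_).trans
    (tsum_indicator_Ioi_rpow_neg_le _ one_lt_two hs)
  · exact Finset.mem_Icc.2 ⟨hq.one_le, hN⟩
  · exact fun h => lt_irrefl _ (Nat.mem_smoothNumbers'.1 h _ hq dvd_rfl)
  · intro m hm
    rw [Finset.mem_Icc]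
    exact ⟨fun h => Nat.mem_smoothNumbers_of_lt h.1 hm,
      fun h => ⟨Nat.pos_of_ne_zero (Nat.ne_zero_of_mem_smoothNumbers h), by omega⟩⟩

/-- Keller's recursion: pₙ₊₁ = lim_{s→∞}
[∑_{j=1}^{2pₙ−1} j^{−s} − ∏_{k=1}^n (1 − p_k^{−s})⁻¹]^{−1/s} (the −1/s power is
taken of the absolute value, which is eventually the same). -/
theorem stmt_5 (n : ℕ) (hn : 1 ≤ n) :
    Tendsto (fun s : ℝ =>
      |(∑ j ∈ Finset.Icc 1 (2 * Nat.nth Nat.Prime (n - 1) - 1), (j : ℝ) ^ (-s)) -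
        ∏ i ∈ Finset.range n, (1 - (Nat.nth Nat.Prime i : ℝ) ^ (-s))⁻¹| ^ (-1 / s))
      atTop (nhds (Nat.nth Nat.Prime n : ℝ)) := by
  have hq : 0 < (Nat.nth Nat.Prime n : ℝ) := by exact_mod_cast (Nat.prime_nth_prime n).pos
  have hbertrand : Nat.nth Nat.Prime n ≤ 2 * Nat.nth Nat.Prime (n - 1) - 1 := by
    have := Nat.nth_prime_succ_lt_two_mul (n - 1)
    rw [Nat.sub_add_cancel hn] at this
    omega
  refine tendsto_abs_rpow_neg_one_div_of_abs_sub_rpow_neg_le hq (lt_add_one _)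
    (C := (∑' m : ℕ, (m : ℝ) ^ (-2 : ℝ)) * ((Nat.nth Nat.Prime n : ℝ) + 1) ^ (2 : ℝ)) ?_
  filter_upwards [eventually_ge_atTop 2] with s hs
  refine (abs_sum_Icc_sub_prod_nth_prime_sub_le hbertrand hs).trans_eq ?_
  rw [sub_eq_add_neg, Real.rpow_add (by positivity), mul_assoc]
end

section
/- Let p₁ < ... < pₙ be the first n primes and pₙ₊₁ the next prime. For real s > 1, ∏_{k=1}^n (1 − p_k^{−s}) · ζ(s) − 1 = pₙ₊₁^{−s} + o(pₙ₊₁^{−s}) as s → ∞; equivalently, pₙ₊₁^s · (∏_{k=1}^n (1 − p_k^{−s}) ζ(s) − 1) → 1 as s → ∞. -/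
open Filter Topology

/-! Sieving a Dirichlet series with completely multiplicative coefficients `f` by a prime `q`
multiplies it by `1 - f q`, so `∏_{k ≤ n} (1 - p_k^{-s}) ζ(s)` is the sum of `m^{-s}` over the
integers with no prime factor below `p = p_{n+1}`. Apart from `1`, the least of them is `p`, so
`p^s (∏ (1 - p_k^{-s}) ζ(s) - 1) = 1 + ∑ (p / m)^s` over the remaining `m > p`; by dominated
convergence, with the bound `(p / m)^2` for `s ≥ 2`, this sum tends to `0`. -/

def siftedBy (P : Finset ℕ) : Set ℕ := {m | ∀ p ∈ P, ¬ p ∣ m}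

lemma mem_siftedBy {P : Finset ℕ} {m : ℕ} : m ∈ siftedBy P ↔ ∀ p ∈ P, ¬ p ∣ m := Iff.rfl

lemma siftedBy_empty : siftedBy ∅ = Set.univ := by
  ext m
  simp [mem_siftedBy]

lemma siftedBy_insert (q : ℕ) (P : Finset ℕ) :
    siftedBy (insert q P) = siftedBy P \ {m | q ∣ m} := by
  ext m
  simp [mem_siftedBy, and_comm]

lemma mul_mem_siftedBy_iff {P : Finset ℕ} (hP : ∀ p ∈ P, p.Prime) {q : ℕ} (hq : q.Prime)
    (hqP : q ∉ P) {m : ℕ} : q * m ∈ siftedBy P ↔ m ∈ siftedBy P := by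
  refine forall₂_congr fun p hp => not_congr ⟨fun h => ?_, fun h => h.mul_left q⟩
  rcases (hP p hp).dvd_mul.mp h with hpq | hpm
  · exact absurd ((Nat.prime_dvd_prime_iff_eq (hP p hp) hq).mp hpq ▸ hp) hqP
  · exact hpm

section Sieve

variable {R : Type*} [NormedCommRing R] [CompleteSpace R] {f : ℕ → R}

lemma tsum_indicator_siftedBy_insert (hmul : ∀ a b, f (a * b) = f a * f b) (hf : Summable f)
    {P : Finset ℕ} (hP : ∀ p ∈ P, p.Prime) {q : ℕ} (hq : q.Prime) (hqP : q ∉ P) :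
    ∑' m, (siftedBy (insert q P)).indicator f m =
      (1 - f q) * ∑' m, (siftedBy P).indicator f m := by
  set D := siftedBy P ∩ {m | q ∣ m}
  have hD : ∑' m, D.indicator f m = f q * ∑' m, (siftedBy P).indicator f m := by
    have hsupp : Function.support (D.indicator f) ⊆ Set.range (q * ·) := fun m hm => by
      obtain ⟨c, rfl⟩ := (Set.mem_of_indicator_ne_zero hm).2
      exact ⟨c, rfl⟩
    rw [← (mul_right_injective₀ hq.ne_zero).tsum_eq hsupp,
      ← (hf.indicator _).tsum_mul_left]
    refine tsum_congr fun m => ?_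
    by_cases hm : m ∈ siftedBy P
    · have hqm : q * m ∈ D := ⟨(mul_mem_siftedBy_iff hP hq hqP).2 hm, dvd_mul_right q m⟩
      simp [Set.indicator_of_mem hqm, Set.indicator_of_mem hm, hmul]
    · have hqm : q * m ∉ D := fun h => hm ((mul_mem_siftedBy_iff hP hq hqP).1 h.1)
      simp [Set.indicator_of_notMem hqm, Set.indicator_of_notMem hm]
  rw [siftedBy_insert, ← Set.sdiff_self_inter, Set.indicator_sdiff Set.inter_subset_left]
  simp only [Pi.sub_apply]
  rw [(hf.indicator _).tsum_sub (hf.indicator _), hD, sub_mul, one_mul]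

lemma tsum_indicator_siftedBy (hmul : ∀ a b, f (a * b) = f a * f b) (hf : Summable f)
    {P : Finset ℕ} (hP : ∀ p ∈ P, p.Prime) :
    ∑' m, (siftedBy P).indicator f m = (∏ p ∈ P, (1 - f p)) * ∑' m, f m := by
  induction P using Finset.induction_on with
  | empty => simp [siftedBy_empty]
  | insert q P hqP ih =>
    have hP' : ∀ p ∈ P, p.Prime := fun p hp => hP p (Finset.mem_insert_of_mem hp)
    rw [tsum_indicator_siftedBy_insert hmul hf hP' (hP q (Finset.mem_insert_self q P)) hqP,
      ih hP', Finset.prod_insert hqP, mul_assoc]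

end Sieve

lemma one_mem_siftedBy_primesBelow (N : ℕ) : 1 ∈ siftedBy N.primesBelow :=
  fun _ hq => (Nat.prime_of_mem_primesBelow hq).not_dvd_one

lemma mem_siftedBy_primesBelow_self {p : ℕ} (hp : p.Prime) : p ∈ siftedBy p.primesBelow :=
  fun _ hq hqp => (Nat.lt_of_mem_primesBelow hq).ne <|
    (Nat.prime_dvd_prime_iff_eq (Nat.prime_of_mem_primesBelow hq) hp).1 hqp

lemma le_of_mem_siftedBy_primesBelow {N m : ℕ} (hm : m ∈ siftedBy N.primesBelow) (hm0 : m ≠ 0)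
    (hm1 : m ≠ 1) : N ≤ m := by
  refine le_trans ?_ (Nat.minFac_le (Nat.pos_of_ne_zero hm0))
  by_contra! h
  exact hm _ (Nat.mem_primesBelow.2 ⟨h, Nat.minFac_prime hm1⟩) (Nat.minFac_dvd m)

lemma primesBelow_nth_prime (n : ℕ) :
    (Nat.nth Nat.Prime n).primesBelow = (Finset.range n).image (Nat.nth Nat.Prime) := by
  ext q
  simp only [Nat.mem_primesBelow, Finset.mem_image, Finset.mem_range]
  constructor
  · rintro ⟨hlt, hq⟩
    refine ⟨Nat.count Nat.Prime q, ?_, Nat.nth_count hq⟩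
    rwa [← Nat.nth_lt_nth Nat.infinite_setOfPred_prime, Nat.nth_count hq]
  · rintro ⟨i, hi, rfl⟩
    exact ⟨Nat.nth_strictMono Nat.infinite_setOfPred_prime hi, Nat.prime_nth_prime i⟩

lemma tendsto_tsum_indicator_div_rpow {B : Set ℕ} {N : ℕ} (hN0 : N ≠ 0) (hN : N ∈ B)
    (hB : ∀ m ∈ B, m ≠ 0 → N ≤ m) :
    Tendsto (fun s : ℝ => ∑' m, B.indicator (fun m : ℕ => ((N : ℝ) / m) ^ s) m) atTop (𝓝 1) := by
  have hbase : ∀ m ∈ B, 0 ≤ (N : ℝ) / m ∧ (N : ℝ) / m ≤ 1 := fun m hm => by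
    refine ⟨by positivity, ?_⟩
    rcases eq_or_ne m 0 with rfl | hm0
    · simp
    · exact div_le_one_of_le₀ (by exact_mod_cast hB m hm hm0) (by positivity)
  have hlim : ∀ m, Tendsto (fun s : ℝ => B.indicator (fun m : ℕ => ((N : ℝ) / m) ^ s) m) atTop
      (𝓝 (if m = N then 1 else 0)) := fun m => by
    by_cases hm : m ∈ B
    · simp only [Set.indicator_of_mem hm]
      split_ifs with hmN
      · simp only [hmN, div_self (Nat.cast_ne_zero (R := ℝ) |>.2 hN0), Real.one_rpow]
        exact tendsto_const_nhds
      · refine tendsto_rpow_atTop_of_base_lt_one _ (by linarith [(hbase m hm).1]) ?_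
        rcases eq_or_ne m 0 with rfl | hm0
        · simp
        · refine (div_lt_one (by positivity)).2 ?_
          exact_mod_cast (hB m hm hm0).lt_of_ne (Ne.symm hmN)
    · simp [Set.indicator_of_notMem hm, show m ≠ N from fun h => hm (h ▸ hN)]
  have hbound : ∀ s : ℝ, 2 ≤ s → ∀ m,
      ‖B.indicator (fun m : ℕ => ((N : ℝ) / m) ^ s) m‖ ≤ (N : ℝ) ^ 2 * ((m : ℝ) ^ 2)⁻¹ :=
    fun s hs m => by
    rw [← div_eq_mul_inv, ← div_pow]
    by_cases hm : m ∈ B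
    · obtain ⟨h0, h1⟩ := hbase m hm
      rw [Set.indicator_of_mem hm, Real.norm_of_nonneg (by positivity), ← Real.rpow_two]
      exact Real.rpow_le_rpow_of_exponent_ge' h0 h1 zero_le_two hs
    · simp [Set.indicator_of_notMem hm]; positivity
  simpa only [tsum_ite_eq] using tendsto_tsum_of_dominated_convergence
    ((Real.summable_nat_pow_inv.2 one_lt_two).mul_left _) hlim
    ((eventually_ge_atTop 2).mono hbound)

lemma tendsto_rpow_mul_tsum_indicator_rpow_neg {B : Set ℕ} {N : ℕ} (hN0 : N ≠ 0) (hN : N ∈ B)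
    (hB : ∀ m ∈ B, m ≠ 0 → N ≤ m) :
    Tendsto (fun s : ℝ => (N : ℝ) ^ s * ∑' m, B.indicator (fun m : ℕ => (m : ℝ) ^ (-s)) m)
      atTop (𝓝 1) := by
  refine (tendsto_tsum_indicator_div_rpow hN0 hN hB).congr fun s => ?_
  rw [← tsum_mul_left]
  refine tsum_congr fun m => ?_
  by_cases hm : m ∈ B
  · rw [Set.indicator_of_mem hm, Set.indicator_of_mem hm, Real.div_rpow (by positivity)
      (by positivity), Real.rpow_neg (by positivity), div_eq_mul_inv]
  · simp [Set.indicator_of_notMem hm]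

lemma tendsto_rpow_mul_tsum_indicator_rpow_neg_sub_one {A : Set ℕ} {N : ℕ} (hN1 : 1 < N)
    (h1 : 1 ∈ A) (hN : N ∈ A) (hA : ∀ m ∈ A, m ≠ 0 → m ≠ 1 → N ≤ m) :
    Tendsto (fun s : ℝ =>
        (N : ℝ) ^ s * (∑' m, A.indicator (fun m : ℕ => (m : ℝ) ^ (-s)) m - 1))
      atTop (𝓝 1) := by
  refine (tendsto_rpow_mul_tsum_indicator_rpow_neg (B := A \ {1}) (by omega)
    ⟨hN, by simpa using hN1.ne'⟩ fun m hm hm0 => hA m hm.1 hm0 hm.2).congr' ?_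
  filter_upwards [eventually_gt_atTop 1] with s hs
  have hf : Summable fun m : ℕ => (m : ℝ) ^ (-s) := Real.summable_nat_rpow.2 (by linarith)
  rw [Set.indicator_sdiff (Set.singleton_subset_iff.2 h1)]
  simp only [Pi.sub_apply]
  rw [(hf.indicator _).tsum_sub (hf.indicator _), Set.indicator_singleton, tsum_pi_single]
  simp

/-- pₙ₊₁^s · (∏_{k=1}^n (1 − p_k^{−s}) ζ(s) − 1) → 1 as real s → ∞,
where ζ(s) = ∑_{m≥1} m^{−s}. -/
theorem stmt_6 (n : ℕ) :
    Tendsto (fun s : ℝ =>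
      (Nat.nth Nat.Prime n : ℝ) ^ s *
        ((∏ i ∈ Finset.range n, (1 - (Nat.nth Nat.Prime i : ℝ) ^ (-s))) *
          (∑' m : ℕ, (m : ℝ) ^ (-s)) - 1))
      atTop (nhds 1) := by
  set p := Nat.nth Nat.Prime n
  have hmul (s : ℝ) (a b : ℕ) :
      ((a * b : ℕ) : ℝ) ^ (-s) = (a : ℝ) ^ (-s) * (b : ℝ) ^ (-s) := by
    rw [Nat.cast_mul, Real.mul_rpow a.cast_nonneg b.cast_nonneg]
  have hEuler : ∀ s : ℝ, 1 < s →
      (∏ i ∈ Finset.range n, (1 - (Nat.nth Nat.Prime i : ℝ) ^ (-s))) * ∑' m : ℕ, (m : ℝ) ^ (-s) =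
        ∑' m, (siftedBy p.primesBelow).indicator (fun m : ℕ => (m : ℝ) ^ (-s)) m := fun s hs => by
    rw [tsum_indicator_siftedBy (hmul s) (Real.summable_nat_rpow.2 (by linarith))
      fun _ => Nat.prime_of_mem_primesBelow, primesBelow_nth_prime,
      Finset.prod_image (Nat.nth_injective Nat.infinite_setOfPred_prime).injOn]
  refine (tendsto_rpow_mul_tsum_indicator_rpow_neg_sub_one (Nat.prime_nth_prime n).one_lt
    (one_mem_siftedBy_primesBelow p) (mem_siftedBy_primesBelow_self (Nat.prime_nth_prime n))
    fun _ => le_of_mem_siftedBy_primesBelow).congr' ?_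
  filter_upwards [eventually_gt_atTop 1] with s hs
  rw [hEuler s hs]
end

section
/- For real s > 1 and the first n primes p₁ < ... < pₙ, the tail product ∏_{j>n} (1 − χ(p_j)/p_j^s)^{−1} (over all primes beyond the n-th) converges and satisfies ∏_{j>n} (1 − χ(p_j)/p_j^s)^{−1} − 1 − χ(pₙ₊₁)/pₙ₊₁^s = O(q^{−s}) as s → ∞ for some real q > pₙ₊₁. -/
/-!
Restricting `m ↦ χ(m) m^{-s}` to the integers all of whose prime factors are at least `pₙ₊₁`
(`Nat.nth Nat.Prime n`, primes being indexed from `0`) gives a completely multiplicative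
function whose Euler product is exactly the tail product, so the tail product equals the sum
of `χ(m) m^{-s}` over these integers. Apart from `m = 1` and `m = pₙ₊₁`, all of them are at
least `q = pₙ₊₁ + 1`, and `∑_{m ≥ q} m^{-s} ≤ q² ζ(2) q^{-s}` for `s ≥ 2`.
-/

open Filter Asymptotics

namespace Nat

/-- `m ≠ 0` is part of the definition so that restricting any `ℕ →* R` to rough numbers gives a
`ℕ →*₀ R`. -/
def IsRough (N m : ℕ) : Prop := m ≠ 0 ∧ ∀ p, p.Prime → p ∣ m → N ≤ p

lemma isRough_one (N : ℕ) : IsRough N 1 :=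
  ⟨one_ne_zero, fun _ hp h => absurd h hp.not_dvd_one⟩

lemma isRough_mul {N a b : ℕ} : IsRough N (a * b) ↔ IsRough N a ∧ IsRough N b := by
  simp only [IsRough, mul_ne_zero_iff]
  constructor
  · rintro ⟨⟨ha, hb⟩, h⟩
    exact ⟨⟨ha, fun p hp hpa => h p hp (hpa.mul_right b)⟩,
      ⟨hb, fun p hp hpb => h p hp (hpb.mul_left a)⟩⟩
  · rintro ⟨⟨ha, hta⟩, ⟨hb, htb⟩⟩
    exact ⟨⟨ha, hb⟩, fun p hp hpab => (hp.dvd_mul.mp hpab).elim (hta p hp) (htb p hp)⟩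

lemma isRough_prime_iff {N p : ℕ} (hp : p.Prime) : IsRough N p ↔ N ≤ p :=
  ⟨fun h => h.2 p hp dvd_rfl,
    fun hNp => ⟨hp.ne_zero, fun _ hq hqp => (prime_dvd_prime_iff_eq hq hp).mp hqp ▸ hNp⟩⟩

lemma IsRough.le {N m : ℕ} (h : IsRough N m) (hm : m ≠ 1) : N ≤ m :=
  (h.2 _ (minFac_prime hm) (minFac_dvd m)).trans (minFac_le (pos_of_ne_zero h.1))

end Nat

namespace MonoidHom

variable {R : Type*} [MonoidWithZero R]

open Classical in
noncomputable def restrictRough (f : ℕ →* R) (N : ℕ) : ℕ →*₀ R where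
  toFun m := if N.IsRough m then f m else 0
  map_zero' := if_neg fun h => h.1 rfl
  map_one' := by simp [Nat.isRough_one]
  map_mul' a b := by
    simp only [Nat.isRough_mul, map_mul]
    split_ifs <;> simp_all

open Classical in
lemma restrictRough_apply (f : ℕ →* R) (N m : ℕ) :
    f.restrictRough N m = if N.IsRough m then f m else 0 :=
  rfl

lemma isRough_of_restrictRough_ne_zero {f : ℕ →* R} {N m : ℕ} (h : f.restrictRough N m ≠ 0) :
    N.IsRough m := by
  by_contra hm
  exact h (by rw [restrictRough_apply, if_neg hm])

lemma restrictRough_prime_of_le (f : ℕ →* R) {N p : ℕ} (hp : p.Prime) (hNp : N ≤ p) :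
    f.restrictRough N p = f p := by
  rw [restrictRough_apply, if_pos ((Nat.isRough_prime_iff hp).mpr hNp)]

lemma restrictRough_prime_of_lt (f : ℕ →* R) {N p : ℕ} (hp : p.Prime) (hpN : p < N) :
    f.restrictRough N p = 0 := by
  rw [restrictRough_apply, if_neg fun h => hpN.not_ge ((Nat.isRough_prime_iff hp).mp h)]

theorem hasProd_nth_prime_tail_eulerProduct {F : Type*} [NormedField F] [CompleteSpace F]
    (f : ℕ →* F) (n : ℕ) (hf : Summable fun m => ‖f.restrictRough (Nat.nth Nat.Prime n) m‖) :
    HasProd (fun j : {j : ℕ // n ≤ j} => (1 - f (Nat.nth Nat.Prime j))⁻¹)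
      (∑' m, f.restrictRough (Nat.nth Nat.Prime n) m) := by
  set g : {j : ℕ // n ≤ j} → Nat.Primes := fun j => ⟨Nat.nth Nat.Prime j, Nat.prime_nth_prime j⟩
  have hmono := Nat.nth_strictMono Nat.infinite_setOfPred_prime
  have hg : Function.Injective g := fun i j h =>
    Subtype.ext (hmono.injective (congrArg Subtype.val h))
  have hsmall (p : Nat.Primes) (hp : p ∉ Set.range g) : (p : ℕ) < Nat.nth Nat.Prime n := by
    rw [← Nat.nth_count p.prop]
    refine hmono (not_le.mp fun hn => hp ⟨⟨_, hn⟩, ?_⟩)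
    exact Subtype.ext (Nat.nth_count p.prop)
  have hprod := EulerProduct.eulerProduct_completely_multiplicative_hasProd hf
  rw [← hg.hasProd_iff fun p hp => by
    rw [restrictRough_prime_of_lt f p.prop (hsmall p hp), sub_zero, inv_one]] at hprod
  convert hprod using 3 with j
  rw [Function.comp_apply, restrictRough_prime_of_le f (g j).prop (hmono.monotone j.prop)]

end MonoidHom

namespace DirichletCharacter

variable {k : ℕ} (χ : DirichletCharacter ℂ k)

/-- Unlike `dirichletSummandHom`, this is multiplicative for every `s`, including `s = 0`. -/
noncomputable def termHom (s : ℂ) : ℕ →* ℂ where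
  toFun m := χ m / (m : ℂ) ^ s
  map_one' := by simp
  map_mul' a b := by
    simp only [Nat.cast_mul, map_mul, Complex.natCast_mul_natCast_cpow, mul_div_mul_comm]

lemma termHom_apply (s : ℂ) (m : ℕ) : χ.termHom s m = χ m / (m : ℂ) ^ s :=
  rfl

lemma norm_restrictRough_termHom_le (s : ℂ) (N m : ℕ) :
    ‖(χ.termHom s).restrictRough N m‖ ≤ (m : ℝ) ^ (-s.re) := by
  by_cases hm : N.IsRough m
  · have hpos : 0 < m := Nat.pos_of_ne_zero hm.1
    rw [MonoidHom.restrictRough_apply, if_pos hm, termHom_apply, norm_div,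
      Complex.norm_natCast_cpow_of_pos hpos, Real.rpow_neg (Nat.cast_nonneg m), ← one_div]
    gcongr
    exact χ.norm_le_one m
  · rw [MonoidHom.restrictRough_apply, if_neg hm, norm_zero]
    positivity

lemma summable_norm_restrictRough_termHom {s : ℂ} (hs : 1 < s.re) (N : ℕ) :
    Summable fun m => ‖(χ.termHom s).restrictRough N m‖ :=
  (Real.summable_nat_rpow.mpr (neg_lt_neg hs)).of_nonneg_of_le (fun _ => norm_nonneg _)
    (χ.norm_restrictRough_termHom_le s N)

end DirichletCharacter

lemma Real.rpow_neg_le_mul_inv_sq {q m s : ℝ} (hq : 0 < q) (hqm : q ≤ m) (hs : 2 ≤ s) :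
    m ^ (-s) ≤ q ^ 2 * q ^ (-s) * (m ^ 2)⁻¹ := by
  have hm : 0 < m := hq.trans_le hqm
  have key : m ^ (2 + -s) ≤ q ^ (2 + -s) :=
    Real.rpow_le_rpow_of_nonpos hq hqm (by linarith)
  rw [Real.rpow_add hm, Real.rpow_add hq, Real.rpow_two, Real.rpow_two] at key
  rw [le_mul_inv_iff₀ (by positivity)]
  linarith

lemma isBigO_atTop_tsum_of_norm_le_rpow_neg {E : Type*} [NormedAddCommGroup E]
    {g : ℝ → ℕ → E} {q : ℝ} (hq : 0 < q) (hsupp : ∀ s m, g s m ≠ 0 → q ≤ m)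
    (hle : ∀ s m, ‖g s m‖ ≤ (m : ℝ) ^ (-s)) :
    (fun s => ∑' m, g s m) =O[atTop] fun s => q ^ (-s) := by
  have hsum : Summable fun m : ℕ => ((m : ℝ) ^ 2)⁻¹ := Real.summable_nat_pow_inv.mpr one_lt_two
  refine IsBigO.of_bound (q ^ 2 * ∑' m : ℕ, ((m : ℝ) ^ 2)⁻¹) ?_
  filter_upwards [eventually_ge_atTop 2] with s hs
  rw [Real.norm_of_nonneg (by positivity), mul_right_comm, ← tsum_mul_left]
  refine tsum_of_norm_bounded (hsum.mul_left _).hasSum fun m => ?_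
  by_cases hm : g s m = 0
  · rw [hm, norm_zero]
    positivity
  · exact (hle s m).trans (Real.rpow_neg_le_mul_inv_sq hq (hsupp s m hm) hs)

/-- For s > 1 the tail Euler product ∏_{j>n} (1 − χ(p_j)/p_j^s)⁻¹ converges
(is multipliable), and ∏_{j>n} (1 − χ(p_j)/p_j^s)⁻¹ − 1 − χ(pₙ₊₁)/pₙ₊₁^s = O(q^{−s})
as s → ∞ for some real q > pₙ₊₁. -/
theorem stmt_14 (k : ℕ) (χ : DirichletCharacter ℂ k) (n : ℕ) :
    (∀ s : ℝ, 1 < s → Multipliable (fun j : {j : ℕ // n ≤ j} =>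
      (1 - χ ((Nat.nth Nat.Prime (j : ℕ) : ℕ) : ZMod k) /
        (Nat.nth Nat.Prime (j : ℕ) : ℂ) ^ (s : ℂ))⁻¹)) ∧
    ∃ q : ℝ, (Nat.nth Nat.Prime n : ℝ) < q ∧
      (fun s : ℝ =>
          (∏' j : {j : ℕ // n ≤ j},
            (1 - χ ((Nat.nth Nat.Prime (j : ℕ) : ℕ) : ZMod k) /
              (Nat.nth Nat.Prime (j : ℕ) : ℂ) ^ (s : ℂ))⁻¹) - 1 -
            χ ((Nat.nth Nat.Prime n : ℕ) : ZMod k) /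
              ((Nat.nth Nat.Prime n : ℕ) : ℂ) ^ (s : ℂ)) =O[atTop]
        (fun s : ℝ => q ^ (-s)) := by
  set p := Nat.nth Nat.Prime n
  have hp := Nat.prime_nth_prime n
  set F : ℝ → ℕ →*₀ ℂ := fun s => (χ.termHom s).restrictRough p
  have hsum (s : ℝ) (hs : 1 < s) : Summable fun m => ‖F s m‖ :=
    χ.summable_norm_restrictRough_termHom (by simpa using hs) p
  have hprod (s : ℝ) (hs : 1 < s) := (χ.termHom s).hasProd_nth_prime_tail_eulerProduct n (hsum s hs)
  refine ⟨fun s hs => (hprod s hs).multipliable, p + 1, by linarith, ?_⟩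
  set g : ℝ → ℕ → ℂ := fun s => (({1, p} : Finset ℕ) : Set ℕ)ᶜ.indicator (F s)
  have hsupp (s : ℝ) (m : ℕ) (hm : g s m ≠ 0) : (p + 1 : ℝ) ≤ m := by
    obtain ⟨hm1p, hFm⟩ := Set.indicator_apply_ne_zero.mp hm
    simp only [Finset.coe_insert, Finset.coe_singleton, Set.mem_compl_iff, Set.mem_insert_iff,
      Set.mem_singleton_iff, not_or] at hm1p
    have hpm := (MonoidHom.isRough_of_restrictRough_ne_zero hFm).le hm1p.1
    exact_mod_cast (show p + 1 ≤ m by omega)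
  refine (isBigO_atTop_tsum_of_norm_le_rpow_neg (by positivity) hsupp fun s m =>
    le_trans (norm_indicator_le_norm_self _ _) (χ.norm_restrictRough_termHom_le s p m)).congr' ?_
    EventuallyEq.rfl
  filter_upwards [eventually_gt_atTop 1] with s hs
  simp only [← χ.termHom_apply]
  rw [(hprod s hs).tprod_eq, ← (hsum s hs).of_norm.sum_add_tsum_compl (s := {1, p}), tsum_subtype,
    Finset.sum_pair hp.one_lt.ne, map_one, MonoidHom.restrictRough_prime_of_le _ hp le_rfl]
  ring
end
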